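/- Let ν be a subpartition of a partition μ, i.e., ν = (μ_{i₁} ≥ ⋯ ≥ μ_{i_s}) for some indices 1 ≤ i₁ < ⋯ < i_s ≤ r of μ = (μ₁ ≥ ⋯ ≥ μ_r). Suppose there exist m pairwise non-proportional polynomials g₁, …, g_m ∈ ℂ[X] of root multiplicity type ν with g₁ + ⋯ + g_m = 0. Then there exist m pairwise non-proportional polynomials f₁, …, f_m ∈ ℂ[X] of root multiplicity type μ with f₁ + ⋯ + f_m = 0. -/

import Mathlib

open Polynomial

/-- Two polynomials are non-proportional: neither is a scalar multiple of the other. -/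
def NonProp (f g : Polynomial ℂ) : Prop := ∀ e : ℂ, f ≠ C e * g ∧ g ≠ C e * f

/-- `f` has root multiplicity type `μ`: it is a nonzero constant times
`∏ (X - aⱼ)^(μ j)` with pairwise distinct `aⱼ`. -/
def HasRootType {k : ℕ} (μ : Fin k → ℕ) (f : Polynomial ℂ) : Prop :=
  ∃ (c : ℂ) (a : Fin k → ℂ), c ≠ 0 ∧ Function.Injective a ∧
    f = C c * ∏ j, (X - C (a j)) ^ (μ j)

/-! Multiply every `gᵢ` by the same polynomial `h = ∏ (X - b j) ^ μ j`, the product running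
over the parts of `μ` missed by `ι`, with distinct `b j` chosen away from every `aᵢ t` in the
factorizations of the `gᵢ`. Then each `gᵢ * h` has root type `μ`, non-proportionality survives
because `h ≠ 0`, and the sum is still `0`. -/

open Finset Function

theorem NonProp.mul_right {f g h : ℂ[X]} (hfg : NonProp f g) (hh : h ≠ 0) :
    NonProp (f * h) (g * h) := by
  intro e
  refine ⟨fun hfe => (hfg e).1 ?_, fun hge => (hfg e).2 ?_⟩
  · exact mul_right_cancel₀ hh (by rw [hfe, mul_assoc])
  · exact mul_right_cancel₀ hh (by rw [hge, mul_assoc])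

theorem Set.Finite.exists_injective_forall_notMem {α : Type*} [Infinite α] {S : Set α}
    (hS : S.Finite) (n : ℕ) : ∃ b : Fin n → α, Injective b ∧ ∀ j, b j ∉ S := by
  let e := (Fin.valEmbedding (n := n)).trans hS.infinite_compl.natEmbedding
  exact ⟨fun j => e j, Subtype.val_injective.comp e.injective, fun j => (e j).2⟩

theorem Function.Injective.extend_of_disjoint {α β γ : Type*} {ι : α → β} {a : α → γ}
    {b : β → γ} (hι : Injective ι) (ha : Injective a) (hb : Injective b)
    (hab : ∀ t j, a t ≠ b j) : Injective (extend ι a b) := by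
  intro j k hjk
  by_cases hj : ∃ t, ι t = j <;> by_cases hk : ∃ u, ι u = k
  · obtain ⟨t, rfl⟩ := hj
    obtain ⟨u, rfl⟩ := hk
    rw [hι.extend_apply, hι.extend_apply] at hjk
    rw [ha hjk]
  · obtain ⟨t, rfl⟩ := hj
    rw [hι.extend_apply, extend_apply' _ _ _ hk] at hjk
    exact absurd hjk (hab t k)
  · obtain ⟨u, rfl⟩ := hk
    rw [hι.extend_apply, extend_apply' _ _ _ hj] at hjk
    exact absurd hjk.symm (hab u j)
  · rw [extend_apply' _ _ _ hj, extend_apply' _ _ _ hk] at hjk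
    exact hb hjk

theorem Finset.prod_extend {α β γ M : Type*} [Fintype α] [Fintype β] [DecidableEq β]
    [CommMonoid M] {ι : α → β} (hι : Injective ι) (a : α → γ) (b : β → γ) (F : β → γ → M) :
    ∏ j, F j (extend ι a b j) = (∏ t, F (ι t) (a t)) * ∏ j ∈ (univ.image ι)ᶜ, F j (b j) := by
  rw [← prod_mul_prod_compl (univ.image ι), prod_image fun t _ u _ h => hι h]
  congr 1
  · exact prod_congr rfl fun t _ => by rw [hι.extend_apply]
  · refine prod_congr rfl fun j hj => ?_
    rw [extend_apply']
    simpa using hj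

theorem HasRootType.mul_prod_compl {r s : ℕ} {μ : Fin r → ℕ} {ι : Fin s → Fin r}
    (hι : Injective ι) {g : ℂ[X]} {c : ℂ} {a : Fin s → ℂ} (hc : c ≠ 0) (ha : Injective a)
    (hg : g = C c * ∏ t, (X - C (a t)) ^ μ (ι t)) {b : Fin r → ℂ} (hb : Injective b)
    (hab : ∀ t j, a t ≠ b j) :
    HasRootType μ (g * ∏ j ∈ (univ.image ι)ᶜ, (X - C (b j)) ^ μ j) := by
  refine ⟨c, extend ι a b, hc, hι.extend_of_disjoint ha hb hab, ?_⟩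
  rw [prod_extend hι a b fun j x => (X - C x) ^ μ j, hg, mul_assoc]

theorem stmt_17_general (r s m : ℕ) (μ : Fin r → ℕ)
    (ι : Fin s → Fin r) (hι : StrictMono ι)
    (g : Fin m → Polynomial ℂ)
    (hg : ∀ i, HasRootType (fun j : Fin s => μ (ι j)) (g i))
    (hgnp : Pairwise fun i j => NonProp (g i) (g j))
    (hgsum : ∑ i, g i = 0) :
    ∃ f : Fin m → Polynomial ℂ,
      (∀ i, HasRootType μ (f i)) ∧
      (Pairwise fun i j => NonProp (f i) (f j)) ∧
      ∑ i, f i = 0 := by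
  choose c a hc ha hrep using hg
  obtain ⟨b, hb, hbS⟩ :=
    (Set.finite_range fun p : Fin m × Fin s => a p.1 p.2).exists_injective_forall_notMem r
  have hab : ∀ i t j, a i t ≠ b j := fun i t j h => hbS j ⟨(i, t), h⟩
  set h := ∏ j ∈ (univ.image ι)ᶜ, (X - C (b j)) ^ μ j
  have hh : h ≠ 0 := prod_ne_zero_iff.2 fun j _ => pow_ne_zero _ (X_sub_C_ne_zero _)
  refine ⟨fun i => g i * h, fun i => ?_, fun i j hij => (hgnp hij).mul_right hh, ?_⟩
  · exact HasRootType.mul_prod_compl hι.injective (hc i) (ha i) (hrep i) hb (hab i)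
  · rw [← sum_mul, hgsum, zero_mul]

theorem stmt_17 (r s m : ℕ) (μ : Fin r → ℕ)
    (hmono : ∀ j k : Fin r, j ≤ k → μ k ≤ μ j) (hpos : ∀ j, 0 < μ j)
    (ι : Fin s → Fin r) (hι : StrictMono ι)
    (g : Fin m → Polynomial ℂ)
    (hg : ∀ i, HasRootType (fun j : Fin s => μ (ι j)) (g i))
    (hgnp : Pairwise fun i j => NonProp (g i) (g j))
    (hgsum : ∑ i, g i = 0) :
    ∃ f : Fin m → Polynomial ℂ,
      (∀ i, HasRootType μ (f i)) ∧
      (Pairwise fun i j => NonProp (f i) (f j)) ∧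
      ∑ i, f i = 0 :=
  stmt_17_general r s m μ ι hι g hg hgnp hgsum
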